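/- arXiv:1102.3629 — 2 statements merged into one kernel-verified Lean document; each statement's English description precedes it below -/
import Mathlib

section
/- Fix d ≥ 3 and 1 ≤ j ≤ d−1, and let A_j = 𝓛_d ∖ {a_j} where a_i = cos(iπ/d). Then for every interior index i ≠ j with 1 ≤ i ≤ d−1, the fundamental Lagrange polynomial satisfies |ℓ(A_j, a_i; a_j)| = 1, and consequently Σ_{a∈A_j} |ℓ(A_j, a; a_j)| ≥ d − 2, so the Lebesgue constant of A_j on [−1,1] is at least d − 2. -/
open Real Finset

/-- The Chebyshev–Lobatto points of degree `d`. -/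
noncomputable def lobatto (d : ℕ) : Finset ℝ :=
  (Finset.range (d + 1)).image (fun j : ℕ => Real.cos (j * π / d))

/-- The fundamental Lagrange interpolation polynomial (as a function) at node `a`. -/
noncomputable def lagBasis (A : Finset ℝ) (a : ℝ) (x : ℝ) : ℝ :=
  ∏ b ∈ A.erase a, (x - b) / (a - b)

/-- The Lebesgue constant of the node set `A` with respect to `[-1,1]`. -/
noncomputable def leb (A : Finset ℝ) : ℝ :=
  ⨆ x ∈ Set.Icc (-1 : ℝ) 1, ∑ a ∈ A, |lagBasis A a x|

/-!
The interior Chebyshev–Lobatto nodes `x_k = cos (kπ/d)`, `0 < k < d`, are the roots of `U_{d-1}`,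
so the node polynomial of `𝓛_d` is `ω = (X² - 1) U_{d-1} / 2^{d-1}`. Evaluating the identity
`d T_d = X U_{d-1} - (1 - X²) U_{d-1}'` at an interior node, where `U_{d-1}` vanishes and
`T_d = (-1)^k`, gives `ω'(x_k) = ∏_{m ≠ k} (x_k - x_m) = (-1)^k d / 2^{d-1}`, whose absolute value
does not depend on `k`. After removing `x_j`, `ℓ(A_j, x_i; x_j) = -ω'(x_j) / ω'(x_i)` has absolute
value `1` for each of the `d - 2` interior `i ≠ j`, and these terms bound the Lebesgue function
at `x_j`, hence the Lebesgue constant.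
-/

open Polynomial Polynomial.Chebyshev

theorem lagBasis_erase_eq_neg_div {s : Finset ℝ} {a b : ℝ} (ha : a ∈ s) (hb : b ∈ s)
    (hab : a ≠ b) :
    lagBasis (s.erase a) b a = -((∏ c ∈ s.erase a, (a - c)) / ∏ c ∈ s.erase b, (b - c)) := by
  rw [lagBasis, prod_div_distrib, ← mul_prod_erase _ (a - ·) (mem_erase.2 ⟨hab.symm, hb⟩),
    ← mul_prod_erase _ (b - ·) (mem_erase.2 ⟨hab, ha⟩), erase_right_comm, mul_div_mul_comm,
    ← neg_sub b a, neg_div, div_self (sub_ne_zero.2 hab.symm)]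
  ring

theorem continuous_lagBasis (A : Finset ℝ) (a : ℝ) : Continuous (lagBasis A a) := by
  unfold lagBasis; fun_prop

theorem sum_abs_lagBasis_le_leb (A : Finset ℝ) {x : ℝ} (hx : x ∈ Set.Icc (-1 : ℝ) 1) :
    ∑ a ∈ A, |lagBasis A a x| ≤ leb A := by
  set G : ℝ → ℝ := fun x => ∑ a ∈ A, |lagBasis A a x|
  have hG : Continuous G := continuous_finsetSum _ fun a _ => (continuous_lagBasis A a).abs
  obtain ⟨M, hM⟩ := (isCompact_Icc (a := (-1 : ℝ)) (b := 1)).bddAbove_image hG.continuousOn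
  have hbdd : BddAbove (Set.range fun y => ⨆ _ : y ∈ Set.Icc (-1 : ℝ) 1, G y) := by
    refine ⟨max M 0, Set.forall_mem_range.2 fun y => ?_⟩
    exact Real.iSup_le (fun hy => le_max_of_le_left (hM ⟨y, hy, rfl⟩)) (le_max_right _ _)
  exact le_ciSup_of_le hbdd x (le_ciSup (f := fun _ => G x) (Set.finite_range _).bddAbove hx)

theorem Finset.image_erase_of_injOn {α β : Type*} [DecidableEq α] [DecidableEq β] {f : α → β}
    {s : Finset α} (hf : Set.InjOn f s) {a : α} (ha : a ∈ s) :
    (s.image f).erase (f a) = (s.erase a).image f := by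
  ext y
  simp only [mem_erase, mem_image]
  constructor
  · rintro ⟨hy, b, hb, rfl⟩
    exact ⟨b, ⟨fun hba => hy (hba ▸ rfl), hb⟩, rfl⟩
  · rintro ⟨b, ⟨hba, hb⟩, rfl⟩
    exact ⟨fun h => hba (hf hb ha h), b, hb, rfl⟩

namespace Polynomial.Chebyshev

variable {d k : ℕ}

theorem node_injOn (d : ℕ) : Set.InjOn (node d) (range (d + 1)) := (strictAntiOn_node d).injOn

theorem U_eq_C_mul_nodal (hd : 0 < d) :
    U ℝ (d - 1 : ℕ) = Polynomial.C (2 ^ (d - 1)) * Lagrange.nodal (Ioo 0 d) (node d) := by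
  have himage : (range (d - 1)).image (fun k : ℕ => cos ((k + 1) * π / ((d - 1 : ℕ) + 1)))
      = (Ioo 0 d).image (node d) := by
    ext x
    simp only [mem_image, mem_range, mem_Ioo]
    constructor
    · rintro ⟨k, hk, rfl⟩
      refine ⟨k + 1, by omega, ?_⟩
      simp [node, Nat.cast_sub (by omega : 1 ≤ d)]
    · rintro ⟨m, hm, rfl⟩
      refine ⟨m - 1, by omega, ?_⟩
      simp [node, Nat.cast_sub (by omega : 1 ≤ d), Nat.cast_sub (by omega : 1 ≤ m)]
  have hroots : (U ℝ (d - 1 : ℕ)).roots = (Ioo 0 d).val.map (node d) := by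
    rw [roots_U_real, himage, image_val_of_injOn]
    exact (node_injOn d).mono (coe_subset.2 fun m hm => by
      simp only [mem_Ioo, mem_range] at hm ⊢
      omega)
  have hcard : Multiset.card (U ℝ (d - 1 : ℕ)).roots = (U ℝ (d - 1 : ℕ)).natDegree := by
    simp [hroots]
  rw [← C_leadingCoeff_mul_prod_multiset_X_sub_C hcard, hroots, leadingCoeff_U_natCast,
    Multiset.map_map]
  rfl

theorem eval_U_node (hk0 : 0 < k) (hkd : k < d) : (U ℝ (d - 1 : ℕ)).eval (node d k) = 0 := by
  rw [U_eq_C_mul_nodal (by omega), eval_mul, Lagrange.eval_nodal_at_node (mem_Ioo.2 ⟨hk0, hkd⟩),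
    mul_zero]

theorem node_sq_sub_one_mul_eval_derivative_U (hk0 : 0 < k) (hkd : k < d) :
    (node d k ^ 2 - 1) * (derivative (U ℝ (d - 1 : ℕ))).eval (node d k) = (-1) ^ k * d := by
  have h := congrArg (eval (node d k)) (add_one_mul_T_eq_poly_in_U (R := ℝ) ((d - 1 : ℕ) : ℤ))
  have hd : ((d - 1 : ℕ) : ℤ) + 1 = d := by omega
  simp only [hd, eval_mul, eval_add, eval_sub, eval_X, eval_one, eval_pow, eval_intCast,
    eval_T_real_node (mem_Iic.2 hkd.le), eval_U_node hk0 hkd] at h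
  rw [show (((d - 1 : ℕ) : ℤ) : ℝ) + 1 = d by exact_mod_cast hd] at h
  linear_combination -h

theorem prod_erase_node_sub_node (hk0 : 0 < k) (hkd : k < d) :
    ∏ m ∈ (range (d + 1)).erase k, (node d k - node d m) = (-1) ^ k * d / 2 ^ (d - 1) := by
  have hsplit : (range (d + 1)).erase k = insert 0 (insert d ((Ioo 0 d).erase k)) := by
    ext m; simp only [mem_erase, mem_range, mem_insert, mem_Ioo]; omega
  have hinterior : ∏ m ∈ (Ioo 0 d).erase k, (node d k - node d m)
      = (derivative (U ℝ (d - 1 : ℕ))).eval (node d k) / 2 ^ (d - 1) := by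
    rw [U_eq_C_mul_nodal (by omega), derivative_C_mul, eval_C_mul,
      Lagrange.eval_nodal_derivative_eval_node_eq (mem_Ioo.2 ⟨hk0, hkd⟩), Lagrange.eval_nodal]
    field_simp
  rw [hsplit, prod_insert (by simp only [mem_insert, mem_erase, mem_Ioo]; omega), prod_insert (by simp), hinterior, node_eq_one,
    node_eq_neg_one (by omega), ← node_sq_sub_one_mul_eval_derivative_U hk0 hkd]
  ring

end Polynomial.Chebyshev

section LobattoMinusOnePoint

variable {d : ℕ}

theorem lobatto_eq_image_node (d : ℕ) : lobatto d = (range (d + 1)).image (node d) := rfl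

theorem prod_erase_lobatto_node {k : ℕ} (hk : k ≤ d) :
    ∏ c ∈ (lobatto d).erase (node d k), (node d k - c)
      = ∏ m ∈ (range (d + 1)).erase k, (node d k - node d m) := by
  rw [lobatto_eq_image_node, image_erase_of_injOn (node_injOn d) (mem_range.2 (by omega)),
    prod_image ((node_injOn d).mono (by simp))]

theorem abs_lagBasis_lobatto_erase {i j : ℕ} (hi0 : 0 < i) (hid : i < d) (hj0 : 0 < j)
    (hjd : j < d) (hij : i ≠ j) :
    |lagBasis ((lobatto d).erase (node d j)) (node d i) (node d j)| = 1 := by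
  have hmem {m : ℕ} (hm : m < d) : node d m ∈ lobatto d :=
    mem_image_of_mem _ (mem_range.2 (by omega))
  have hne : node d j ≠ node d i := fun h =>
    hij (node_injOn d (mem_range.2 (by omega)) (mem_range.2 (by omega)) h).symm
  rw [lagBasis_erase_eq_neg_div (hmem hjd) (hmem hid) hne, prod_erase_lobatto_node hjd.le,
    prod_erase_lobatto_node hid.le, prod_erase_node_sub_node hj0 hjd,
    prod_erase_node_sub_node hi0 hid]
  have hd : (d : ℝ) ≠ 0 := Nat.cast_ne_zero.2 (by omega)
  simp [abs_div, hd]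

theorem sub_two_le_sum_abs_lagBasis_lobatto_erase {j : ℕ} (hj0 : 0 < j) (hjd : j < d) :
    (d : ℝ) - 2 ≤ ∑ a ∈ (lobatto d).erase (node d j),
      |lagBasis ((lobatto d).erase (node d j)) a (node d j)| := by
  have hinterior : (Ioo 0 d).erase j ⊆ (range (d + 1)).erase j := fun m => by
    simp only [mem_erase, mem_Ioo, mem_range]
    omega
  have hsub : ((Ioo 0 d).erase j).image (node d) ⊆ (lobatto d).erase (node d j) := by
    rw [lobatto_eq_image_node, image_erase_of_injOn (node_injOn d) (mem_range.2 (by omega))]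
    exact image_subset_image hinterior
  have hinj : Set.InjOn (node d) ((Ioo 0 d).erase j) :=
    (node_injOn d).mono (coe_subset.2 (hinterior.trans (erase_subset _ _)))
  calc (d : ℝ) - 2 = ((Ioo 0 d).erase j).card := by
        rw [card_erase_of_mem (mem_Ioo.2 ⟨hj0, hjd⟩), Nat.card_Ioo,
          Nat.sub_zero, Nat.sub_sub, Nat.cast_sub (by omega)]
        norm_num
    _ = ∑ i ∈ (Ioo 0 d).erase j,
          |lagBasis ((lobatto d).erase (node d j)) (node d i) (node d j)| := by
        rw [card_eq_sum_ones, Nat.cast_sum, Nat.cast_one]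
        refine sum_congr rfl fun i hi => ?_
        obtain ⟨hij, hi0, hid⟩ : i ≠ j ∧ 0 < i ∧ i < d := by simpa using hi
        exact (abs_lagBasis_lobatto_erase hi0 hid hj0 hjd hij).symm
    _ = ∑ a ∈ ((Ioo 0 d).erase j).image (node d),
          |lagBasis ((lobatto d).erase (node d j)) a (node d j)| := by
        rw [sum_image hinj]
    _ ≤ ∑ a ∈ (lobatto d).erase (node d j),
          |lagBasis ((lobatto d).erase (node d j)) a (node d j)| :=
        sum_le_sum_of_subset_of_nonneg hsub fun _ _ _ => abs_nonneg _

end LobattoMinusOnePoint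

theorem lobatto_minus_one_point_general (d : ℕ) (j : ℕ)
    (hj1 : 1 ≤ j) (hj2 : j ≤ d - 1) :
    (∀ i : ℕ, 1 ≤ i → i ≤ d - 1 → i ≠ j →
      |lagBasis ((lobatto d).erase (Real.cos (j * π / d))) (Real.cos (i * π / d))
        (Real.cos (j * π / d))| = 1) ∧
    (d : ℝ) - 2 ≤ ∑ a ∈ (lobatto d).erase (Real.cos (j * π / d)),
      |lagBasis ((lobatto d).erase (Real.cos (j * π / d))) a (Real.cos (j * π / d))| ∧
    (d : ℝ) - 2 ≤ leb ((lobatto d).erase (Real.cos (j * π / d))) := by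
  have hjd : j < d := by omega
  simp only [show ∀ k : ℕ, cos (k * π / d) = node d k from fun _ => rfl]
  have hsum := sub_two_le_sum_abs_lagBasis_lobatto_erase hj1 hjd
  exact ⟨fun i hi1 hi2 hij => abs_lagBasis_lobatto_erase hi1 (by omega) hj1 hjd hij, hsum,
    hsum.trans (sum_abs_lagBasis_le_leb _ node_mem_Icc)⟩

theorem lobatto_minus_one_point (d : ℕ) (hd : 3 ≤ d) (j : ℕ)
    (hj1 : 1 ≤ j) (hj2 : j ≤ d - 1) :
    (∀ i : ℕ, 1 ≤ i → i ≤ d - 1 → i ≠ j →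
      |lagBasis ((lobatto d).erase (Real.cos (j * π / d))) (Real.cos (i * π / d))
        (Real.cos (j * π / d))| = 1) ∧
    (d : ℝ) - 2 ≤ ∑ a ∈ (lobatto d).erase (Real.cos (j * π / d)),
      |lagBasis ((lobatto d).erase (Real.cos (j * π / d))) a (Real.cos (j * π / d))| ∧
    (d : ℝ) - 2 ≤ leb ((lobatto d).erase (Real.cos (j * π / d))) :=
  lobatto_minus_one_point_general d j hj1 hj2
end

section
/- There exists a constant M such that for all d ≥ 1 and all β with sin(dβ) ≠ 0, the Lebesgue constant of the modified Chebyshev points 𝒯_d^{(β)} on [−1,1] satisfies Δ(𝒯_d^{(β)}) ≤ M log(d+1) / |sin dβ|. -/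
/-
The nodes `cos θ_j`, `θ_j = β + 2jπ/d`, are the `d` roots of `T_d - cos (d β)`. So at `x = cos φ`
the node polynomial equals `(cos (d φ) - cos (d β)) / 2^(d-1)`, and (through `T_d' = d U_{d-1}`)
its derivative at `cos θ_k` equals `d sin (d β) / (2^(d-1) sin θ_k)`. Hence
`ℓ_k(cos φ) = (cos (d φ) - cos (d θ_k)) sin θ_k / ((cos φ - cos θ_k) d sin (d β))`, and factoring
both differences of cosines bounds `|ℓ_k(cos φ)|` by
`(|sin (d u) / sin u| + |sin (d v) / sin v|) / (d |sin (d β)|)` with `u, v = (φ ± θ_k) / 2`.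
As `k` varies, `u` and `v` run over shifted grids of mesh `π / d`, and by Jordan's inequality
the sum of `|sin (d x) / sin x|` over such a grid is at most `2 d H_d`. Thus
`Δ ≤ 4 H_d / |sin (d β)| ≤ 12 log (d + 1) / |sin (d β)|`.
-/

open Real Finset

/-- The modified Chebyshev points of degree `d` with parameter `β`. -/
noncomputable def modCheb (d : ℕ) (β : ℝ) : Finset ℝ :=
  (Finset.range d).image (fun j : ℕ => Real.cos (β + 2 * j * π / d))

theorem abs_sin_nat_mul_le (n : ℕ) (x : ℝ) : |sin (n * x)| ≤ n * |sin x| := by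
  induction n with
  | zero => simp
  | succ n ih =>
    calc |sin ((n + 1 : ℕ) * x)| = |sin (n * x) * cos x + cos (n * x) * sin x| := by
          push_cast; rw [add_mul, one_mul, sin_add]
      _ ≤ |sin (n * x)| * |cos x| + |cos (n * x)| * |sin x| := by
          rw [← abs_mul, ← abs_mul]; exact abs_add_le _ _
      _ ≤ n * |sin x| * 1 + 1 * |sin x| := by
          gcongr
          exacts [abs_cos_le_one x, abs_cos_le_one _]
      _ = (n + 1 : ℕ) * |sin x| := by push_cast; ring

theorem abs_sin_sub_le (x y : ℝ) : |sin (x - y)| ≤ |sin x| + |sin y| := by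
  rw [sin_sub]
  calc |sin x * cos y - cos x * sin y| ≤ |sin x| * |cos y| + |cos x| * |sin y| := by
        rw [← abs_mul, ← abs_mul]; exact abs_sub _ _
    _ ≤ |sin x| * 1 + 1 * |sin y| := by
        gcongr
        exacts [abs_cos_le_one y, abs_cos_le_one x]
    _ = |sin x| + |sin y| := by ring

noncomputable def sinRatio (d : ℕ) (x : ℝ) : ℝ := |sin (d * x)| / |sin x|

section sinRatio

variable (d : ℕ)

theorem sinRatio_le (x : ℝ) : sinRatio d x ≤ d :=
  div_le_of_le_mul₀ (abs_nonneg _) (Nat.cast_nonneg _) (abs_sin_nat_mul_le d x)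

theorem sinRatio_neg (x : ℝ) : sinRatio d (-x) = sinRatio d x := by
  simp only [sinRatio, mul_neg, sin_neg, abs_neg]

theorem sinRatio_periodic : Function.Periodic (sinRatio d) π := fun x => by
  have h : (d : ℝ) * (x + π) = d * x + d * π := by ring
  simp only [sinRatio, h, sin_add_pi, sin_add_nat_mul_pi, abs_mul, abs_neg, abs_pow, abs_one,
    one_pow, one_mul]

theorem sinRatio_le_div_succ {k : ℕ} {x : ℝ} (hd : 0 < d) (hkx : k * π / d ≤ x)
    (hx : x ≤ π / 2) : sinRatio d x ≤ d / (k + 1) := by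
  rcases Nat.eq_zero_or_pos k with rfl | hk
  · simpa using sinRatio_le d x
  have hsin : 2 * k / d ≤ sin x :=
    calc 2 * k / d = 2 / π * (k * π / d) := by field_simp
      _ ≤ 2 / π * x := by gcongr
      _ ≤ sin x := mul_le_sin ((by positivity : (0 : ℝ) ≤ k * π / d).trans hkx) hx
  have hpos : (0 : ℝ) < 2 * k / d := by positivity
  calc sinRatio d x ≤ 1 / (2 * k / d) := by
        rw [sinRatio, abs_of_pos (hpos.trans_le hsin)]
        exact div_le_div₀ zero_le_one (abs_sin_le_one _) hpos hsin
    _ = d / (2 * k) := by field_simp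
    _ ≤ d / (k + 1) := by
        gcongr
        have : (1 : ℝ) ≤ k := by exact_mod_cast hk
        linarith

/-- On the `k`-th cell `[kπ/d, (k+1)π/d]` of `[0, π]`, use Jordan's inequality at whichever
endpoint of `[0, π]` is closer. -/
theorem sinRatio_le_of_mem_cell {k : ℕ} (hk : k < d) {x : ℝ} (hkx : k * π / d ≤ x)
    (hxk : x ≤ (k + 1) * π / d) :
    sinRatio d x ≤ d / (k + 1) + d / ((d - 1 - k : ℕ) + 1) := by
  have hd : 0 < d := by omega
  rcases le_total x (π / 2) with hx | hx
  · have := sinRatio_le_div_succ d hd hkx hx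
    have : (0 : ℝ) ≤ d / ((d - 1 - k : ℕ) + 1) := by positivity
    linarith
  · have hrefl : sinRatio d x = sinRatio d (π - x) := by
      rw [sub_eq_neg_add, sinRatio_periodic, sinRatio_neg]
    have hcell : ((d - 1 - k : ℕ) : ℝ) * π / d ≤ π - x := by
      rw [Nat.cast_sub (by omega), Nat.cast_sub (by omega)]
      have : (d : ℝ) ≠ 0 := by positivity
      rw [le_sub_iff_add_le, ← le_sub_iff_add_le']
      convert hxk using 1
      field_simp
      ring
    have := sinRatio_le_div_succ d hd hcell (by linarith)
    have : (0 : ℝ) ≤ d / (k + 1) := by positivity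
    linarith

theorem sum_sinRatio_periodic :
    Function.Periodic (fun c => ∑ k ∈ range d, sinRatio d (c + k * π / d)) (π / d) := by
  intro c
  rcases d with _ | n
  · simp
  dsimp only
  rw [sum_range_succ, sum_range_succ' (fun k : ℕ => sinRatio _ (c + k * π / _))]
  have hlast : c + π / (n + 1 : ℕ) + n * π / (n + 1 : ℕ) = c + π := by
    push_cast; field_simp; ring
  rw [hlast, sinRatio_periodic]
  congr 1
  · refine sum_congr rfl fun k _ => ?_
    push_cast; ring_nf
  · simp

/-- By periodicity we may take `c ∈ [0, π/d)`, so that the `k`-th term lies in the `k`-th cell. -/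
theorem sum_sinRatio_le (hd : 0 < d) (c : ℝ) :
    ∑ k ∈ range d, sinRatio d (c + k * π / d) ≤ 2 * d * harmonic d := by
  obtain ⟨c, ⟨hc0, hc⟩, hcc⟩ := (sum_sinRatio_periodic d).exists_mem_Ico₀ (by positivity) c
  rw [hcc]
  have hcell : ∀ k ∈ range d,
      sinRatio d (c + k * π / d) ≤ d / (k + 1) + d / ((d - 1 - k : ℕ) + 1) := by
    intro k hk
    refine sinRatio_le_of_mem_cell d (mem_range.mp hk) (by linarith) ?_
    rw [add_mul, add_div, one_mul]
    linarith
  calc _ ≤ ∑ k ∈ range d, ((d : ℝ) / (k + 1) + d / ((d - 1 - k : ℕ) + 1)) :=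
        sum_le_sum hcell
    _ = 2 * d * harmonic d := by
      rw [sum_add_distrib, sum_range_reflect (fun k => (d : ℝ) / ((k : ℕ) + 1)) d, harmonic]
      push_cast
      rw [← two_mul, mul_sum, mul_sum]
      refine sum_congr rfl fun k _ => ?_
      ring

end sinRatio

/-- With `u, v = (φ ± θ) / 2`, both differences of cosines factor as `-2 sin _ sin _`, and
`|sin θ| = |sin (u - v)| ≤ |sin u| + |sin v|`. -/
theorem abs_cos_sub_cos_mul_sin_div_le (d : ℕ) (φ θ : ℝ) :
    |(cos (d * φ) - cos (d * θ)) * sin θ / (cos φ - cos θ)| ≤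
      sinRatio d ((φ + θ) / 2) + sinRatio d ((φ - θ) / 2) := by
  set u := (φ + θ) / 2
  set v := (φ - θ) / 2
  have hnum : cos (d * φ) - cos (d * θ) = -2 * sin (d * u) * sin (d * v) := by
    rw [cos_sub_cos, show (d * φ + d * θ) / 2 = d * u by ring,
      show (d * φ - d * θ) / 2 = d * v by ring]
  have hden : cos φ - cos θ = -2 * sin u * sin v := cos_sub_cos φ θ
  have hθ : θ = u - v := by ring
  rw [hnum, hden, hθ, sinRatio, sinRatio]
  set p := |sin (d * u)|
  set q := |sin (d * v)|
  set a := |sin u|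
  set b := |sin v|
  have hlhs : |-2 * sin (d * u) * sin (d * v) * sin (u - v) / (-2 * sin u * sin v)| =
      p * q * |sin (u - v)| / (a * b) := by
    simp only [abs_div, abs_mul, abs_neg, abs_two, mul_assoc,
      mul_div_mul_left _ _ (two_ne_zero' ℝ)]
    rfl
  rw [hlhs]
  rcases eq_or_ne (a * b) 0 with hab | hab
  · rw [hab, div_zero]; unfold p q a b; positivity
  have ha : 0 < a := (abs_nonneg _).lt_of_ne (left_ne_zero_of_mul hab).symm
  have hb : 0 < b := (abs_nonneg _).lt_of_ne (right_ne_zero_of_mul hab).symm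
  calc p * q * |sin (u - v)| / (a * b) ≤ p * q * (a + b) / (a * b) := by
        gcongr; exact abs_sin_sub_le u v
    _ = p * q / a + q * p / b := by field_simp; ring
    _ ≤ p / a + q / b := by
        gcongr
        · exact mul_le_of_le_one_right (abs_nonneg _) (abs_sin_le_one _)
        · exact mul_le_of_le_one_right (abs_nonneg _) (abs_sin_le_one _)

theorem lagBasis_eq_div {A : Finset ℝ} {a x : ℝ} (ha : a ∈ A) (hxa : x ≠ a) :
    lagBasis A a x = (∏ b ∈ A, (x - b)) / ((x - a) * ∏ b ∈ A.erase a, (a - b)) := by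
  rw [lagBasis, prod_div_distrib, ← mul_prod_erase A (fun b => x - b) ha,
    mul_div_mul_left _ _ (sub_ne_zero.mpr hxa)]

theorem sum_abs_lagBasis_of_mem {A : Finset ℝ} {x : ℝ} (hx : x ∈ A) :
    ∑ a ∈ A, |lagBasis A a x| = 1 := by
  rw [sum_eq_single_of_mem x hx fun a _ hax => ?_]
  · rw [lagBasis, prod_eq_one fun b hb => div_self (sub_ne_zero.mpr (ne_of_mem_erase hb).symm),
      abs_one]
  · rw [lagBasis, prod_eq_zero (mem_erase.mpr ⟨hax.symm, hx⟩) (by rw [sub_self, zero_div]),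
      abs_zero]

/-- The angle `θ_j = β + 2jπ/d` of the `j`-th node `cos θ_j` of `modCheb d β`. -/
noncomputable def modChebAngle (d : ℕ) (β : ℝ) (j : ℕ) : ℝ := β + 2 * j * π / d

section modCheb

variable {d : ℕ} {β : ℝ}

open Polynomial

theorem modCheb_eq_image : modCheb d β = (range d).image (fun j => cos (modChebAngle d β j)) :=
  rfl

theorem cos_modChebAngle_mem {j : ℕ} (hj : j < d) : cos (modChebAngle d β j) ∈ modCheb d β :=
  mem_image_of_mem _ (mem_range.mpr hj)

theorem ne_zero_of_sin_mul_ne_zero (hs : sin (d * β) ≠ 0) : d ≠ 0 := by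
  rintro rfl; simp at hs

theorem mul_modChebAngle (hd : d ≠ 0) (j : ℕ) :
    d * modChebAngle d β j = d * β + j * (2 * π) := by
  unfold modChebAngle; field_simp

theorem cos_mul_modChebAngle (hd : d ≠ 0) (j : ℕ) :
    cos (d * modChebAngle d β j) = cos (d * β) := by
  rw [mul_modChebAngle hd, cos_add_nat_mul_two_pi]

theorem sin_mul_modChebAngle (hd : d ≠ 0) (j : ℕ) :
    sin (d * modChebAngle d β j) = sin (d * β) := by
  rw [mul_modChebAngle hd, sin_add_nat_mul_two_pi]

/-- `cos θ_j = cos θ_k` forces `θ_k = θ_j` or `θ_k = -θ_j` modulo `2π`; the first gives `j = k`,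
the second `d β ∈ π ℤ`. -/
theorem injOn_cos_modChebAngle (hs : sin (d * β) ≠ 0) :
    Set.InjOn (fun j => cos (modChebAngle d β j)) (range d) := by
  have hd := ne_zero_of_sin_mul_ne_zero hs
  intro j hj k hk hjk
  obtain ⟨m, hm | hm⟩ := cos_eq_cos_iff.mp hjk <;> simp only [modChebAngle] at hm
  · have hdvd : (d : ℤ) ∣ (k : ℤ) - j := ⟨m, by
      have : ((k : ℤ) - j : ℝ) = d * m :=
        mul_right_cancel₀ (by positivity : (2 : ℝ) * π ≠ 0)
          (by push_cast; field_simp at hm; linarith)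
      exact_mod_cast this⟩
    have hlt : |(k : ℤ) - j| < d := by
      rw [abs_lt]; simp only [coe_range, Set.mem_Iio] at hj hk; omega
    have := Int.eq_zero_of_abs_lt_dvd hdvd hlt
    omega
  · refine absurd ?_ hs
    have : (d : ℝ) * β = ((d * m - j - k : ℤ) : ℝ) * π := by
      push_cast; field_simp at hm; linarith
    rw [this, sin_int_mul_pi]

theorem card_modCheb (hs : sin (d * β) ≠ 0) : #(modCheb d β) = d := by
  rw [modCheb_eq_image, card_image_of_injOn (injOn_cos_modChebAngle hs), card_range]


/-- The node polynomial of `modCheb d β` is `(T_d - cos (d β)) / 2^(d-1)`: both sides have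
degree `d`, leading coefficient `2^(d-1)`, and vanish at the `d` nodes. -/
theorem chebyshevT_sub_C_eq_C_mul_nodal (hs : sin (d * β) ≠ 0) :
    Chebyshev.T ℝ d - C (cos (d * β)) = C (2 ^ (d - 1)) * Lagrange.nodal (modCheb d β) id := by
  have hd := ne_zero_of_sin_mul_ne_zero hs
  have hdeg : (Chebyshev.T ℝ d - C (cos (d * β))).degree = d := by
    rw [degree_sub_C] <;> simp [Nat.pos_of_ne_zero hd]
  refine eq_of_degree_sub_lt_of_eval_finset_eq (modCheb d β) ?_ fun x hx => ?_
  · rw [card_modCheb hs, ← hdeg]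
    refine degree_sub_lt_left ?_ ?_ ?_
    · rw [hdeg, degree_C_mul (by positivity), Lagrange.degree_nodal, card_modCheb hs]
    · rw [← degree_ne_bot, hdeg]; exact WithBot.natCast_ne_bot d
    · rw [leadingCoeff_sub_of_degree_lt, leadingCoeff_mul, leadingCoeff_C,
        Lagrange.nodal_monic.leadingCoeff]
      · simp
      · rw [Chebyshev.degree_T, Int.natAbs_natCast]
        exact degree_C_le.trans_lt (by exact_mod_cast Nat.pos_of_ne_zero hd)
  · have hnode : eval x (Lagrange.nodal (modCheb d β) id) = 0 :=
      Lagrange.eval_nodal_at_node (v := id) hx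
    rw [eval_sub, eval_C, eval_mul, eval_C, hnode, mul_zero, sub_eq_zero]
    obtain ⟨j, -, rfl⟩ := mem_image.mp hx
    rw [Chebyshev.T_real_cos, Int.cast_natCast]
    exact cos_mul_modChebAngle hd j

theorem two_pow_mul_prod_sub_modCheb (hs : sin (d * β) ≠ 0) (φ : ℝ) :
    2 ^ (d - 1) * ∏ b ∈ modCheb d β, (cos φ - b) = cos (d * φ) - cos (d * β) := by
  have h := congrArg (eval (cos φ)) (chebyshevT_sub_C_eq_C_mul_nodal hs)
  rw [eval_sub, eval_C, Chebyshev.T_real_cos, Int.cast_natCast, eval_mul, eval_C,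
    Lagrange.eval_nodal] at h
  exact h.symm

/-- The derivative of the node polynomial at a node, computed through `T_d' = d U_{d-1}` and
`U_{d-1}(cos θ) sin θ = sin (d θ)`. -/
theorem two_pow_mul_prod_erase_modCheb_mul_sin (hs : sin (d * β) ≠ 0) {j : ℕ} (hj : j < d) :
    2 ^ (d - 1) * (∏ b ∈ (modCheb d β).erase (cos (modChebAngle d β j)),
      (cos (modChebAngle d β j) - b)) * sin (modChebAngle d β j) = d * sin (d * β) := by
  have hd := ne_zero_of_sin_mul_ne_zero hs
  have h := congrArg (fun p => (derivative p).eval (cos (modChebAngle d β j)))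
    (chebyshevT_sub_C_eq_C_mul_nodal hs)
  have hnode :=
    Lagrange.eval_nodal_derivative_eval_node_eq (v := id) (cos_modChebAngle_mem (β := β) hj)
  simp only [derivative_sub, derivative_C, sub_zero, Chebyshev.T_derivative_eq_U, derivative_C_mul,
    eval_mul, eval_C, eval_intCast, id_eq] at h hnode
  rw [hnode, Lagrange.eval_nodal] at h
  simp only [id_eq] at h
  have hU := Chebyshev.U_real_cos (modChebAngle d β j) (d - 1)
  push_cast at hU h
  rw [sub_add_cancel, sin_mul_modChebAngle hd] at hU
  rw [← h, mul_assoc, hU]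

theorem lagBasis_modCheb (hs : sin (d * β) ≠ 0) {j : ℕ} (hj : j < d) {φ : ℝ}
    (hφ : cos φ ∉ modCheb d β) :
    lagBasis (modCheb d β) (cos (modChebAngle d β j)) (cos φ) =
      (cos (d * φ) - cos (d * modChebAngle d β j)) * sin (modChebAngle d β j) /
        ((cos φ - cos (modChebAngle d β j)) * (d * sin (d * β))) := by
  have hd := ne_zero_of_sin_mul_ne_zero hs
  have hmem := cos_modChebAngle_mem (β := β) hj
  have hne : cos φ - cos (modChebAngle d β j) ≠ 0 :=
    sub_ne_zero.mpr fun h => hφ (h ▸ hmem)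
  have hder := two_pow_mul_prod_erase_modCheb_mul_sin hs hj
  have hder0 : 2 ^ (d - 1) * (∏ b ∈ (modCheb d β).erase (cos (modChebAngle d β j)),
      (cos (modChebAngle d β j) - b)) * sin (modChebAngle d β j) ≠ 0 := by
    rw [hder]; exact mul_ne_zero (Nat.cast_ne_zero.mpr hd) hs
  rw [lagBasis_eq_div hmem (sub_ne_zero.mp hne), cos_mul_modChebAngle hd,
    ← two_pow_mul_prod_sub_modCheb hs φ, ← hder]
  field_simp [left_ne_zero_of_mul hder0, right_ne_zero_of_mul hder0]

theorem abs_lagBasis_modCheb_le (hs : sin (d * β) ≠ 0) {j : ℕ} (hj : j < d) {φ : ℝ}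
    (hφ : cos φ ∉ modCheb d β) :
    |lagBasis (modCheb d β) (cos (modChebAngle d β j)) (cos φ)| ≤
      (sinRatio d ((φ + β) / 2 + j * π / d) + sinRatio d ((β - φ) / 2 + j * π / d)) /
        (d * |sin (d * β)|) := by
  rw [lagBasis_modCheb hs hj hφ, ← div_div, abs_div, abs_mul, Nat.abs_cast]
  have hsum : (φ + modChebAngle d β j) / 2 = (φ + β) / 2 + j * π / d := by
    unfold modChebAngle; ring
  have hdiff : (φ - modChebAngle d β j) / 2 = -((β - φ) / 2 + j * π / d) := by
    unfold modChebAngle; ring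
  have h := abs_cos_sub_cos_mul_sin_div_le d φ (modChebAngle d β j)
  rw [hsum, hdiff, sinRatio_neg] at h
  gcongr

theorem sum_abs_lagBasis_modCheb_le (hs : sin (d * β) ≠ 0) {x : ℝ} (hx₁ : -1 ≤ x) (hx₂ : x ≤ 1)
    (hxA : x ∉ modCheb d β) :
    ∑ a ∈ modCheb d β, |lagBasis (modCheb d β) a x| ≤ 4 * harmonic d / |sin (d * β)| := by
  have hd := Nat.pos_of_ne_zero (ne_zero_of_sin_mul_ne_zero hs)
  set φ := arccos x
  rw [← cos_arccos hx₁ hx₂] at hxA ⊢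
  calc ∑ a ∈ modCheb d β, |lagBasis (modCheb d β) a (cos φ)|
      = ∑ j ∈ range d, |lagBasis (modCheb d β) (cos (modChebAngle d β j)) (cos φ)| :=
        sum_image (injOn_cos_modChebAngle hs)
    _ ≤ ∑ j ∈ range d, (sinRatio d ((φ + β) / 2 + j * π / d) +
          sinRatio d ((β - φ) / 2 + j * π / d)) / (d * |sin (d * β)|) :=
        sum_le_sum fun j hj => abs_lagBasis_modCheb_le hs (mem_range.mp hj) hxA
    _ = (∑ j ∈ range d, sinRatio d ((φ + β) / 2 + j * π / d) +
          ∑ j ∈ range d, sinRatio d ((β - φ) / 2 + j * π / d)) / (d * |sin (d * β)|) := by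
        rw [← sum_div, sum_add_distrib]
    _ ≤ (2 * d * harmonic d + 2 * d * harmonic d) / (d * |sin (d * β)|) := by
        gcongr <;> exact sum_sinRatio_le d hd _
    _ = 4 * harmonic d / |sin (d * β)| := by
        field_simp; ring

end modCheb

theorem one_half_lt_log_nat_add_one {n : ℕ} (hn : n ≠ 0) : 1 / 2 < log (n + 1) :=
  calc 1 / 2 < log 2 := by linarith [log_two_gt_d9]
    _ ≤ log (n + 1) := log_le_log two_pos (by norm_cast; omega)

theorem harmonic_le_three_mul_log_add_one {n : ℕ} (hn : n ≠ 0) :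
    (harmonic n : ℝ) ≤ 3 * log (n + 1) := by
  have hmono : log n ≤ log (n + 1) :=
    log_le_log (by exact_mod_cast Nat.pos_of_ne_zero hn) (by linarith)
  linarith [harmonic_le_one_add_log n, one_half_lt_log_nat_add_one hn]

theorem leb_modCheb_bound :
    ∃ M : ℝ, ∀ d : ℕ, 1 ≤ d → ∀ β : ℝ, Real.sin (d * β) ≠ 0 →
      leb (modCheb d β) ≤ M * Real.log (d + 1) / |Real.sin (d * β)| := by
  refine ⟨12, fun d _ β hs => ?_⟩
  have hd := ne_zero_of_sin_mul_ne_zero hs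
  have hs₀ : 0 < |sin (d * β)| := abs_pos.mpr hs
  have hone : 1 ≤ 12 * log (d + 1) / |sin (d * β)| := by
    rw [le_div_iff₀ hs₀]
    linarith [abs_sin_le_one (d * β), one_half_lt_log_nat_add_one hd]
  refine Real.iSup_le (fun x => Real.iSup_le (fun hx => ?_) (zero_le_one.trans hone))
    (zero_le_one.trans hone)
  by_cases hxA : x ∈ modCheb d β
  · rw [sum_abs_lagBasis_of_mem hxA]
    exact hone
  · refine (sum_abs_lagBasis_modCheb_le hs hx.1 hx.2 hxA).trans ?_
    exact div_le_div_of_nonneg_right (by linarith [harmonic_le_three_mul_log_add_one hd]) hs₀.le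
end
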